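/- arXiv:2201.09192 — 4 statements merged into one kernel-verified Lean document; each statement's English description precedes it below -/
import Mathlib

section
/- For positive reals c, c' with c ≥ a·c' for a constant a ∈ (0, 1/2], the inequality K(c, c') ≥ (3a/5)·Q(c, c') holds, where K(c, c') = c'/c - 1 - log(c'/c) and Q(c, c') = (c'/c - 1)². -/
/-!
The rational function `(t - 1) * (t + 5) / (4 * t + 2)` is the `[2/1]` Padé approximant of `log`
at `1`, and it dominates `log` on all of `(0, ∞)`: the derivative of the gap is
`4 (t - 1)³ / (t (4t + 2)²)`, so the gap is minimal, namely `0`, at `t = 1`. Hence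
`t - 1 - log t ≥ 3 (t - 1)² / (4t + 2)`, and `a t ≤ 1`, `a ≤ 1/2` give `a (4t + 2) ≤ 5`,
i.e. `3a/5 ≤ 3 / (4t + 2)`.
-/

open Real Set

lemma le_of_sub_mul_deriv_nonneg {f f' : ℝ → ℝ} {m t : ℝ} (hm : 0 < m) (ht : 0 < t)
    (hf : ∀ x, 0 < x → HasDerivAt f (f' x) x) (hf' : ∀ x, 0 < x → 0 ≤ (x - m) * f' x) :
    f m ≤ f t := by
  have hcont : ContinuousOn f (Ioi 0) := fun x hx => (hf x hx).continuousAt.continuousWithinAt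
  rcases le_total t m with htm | hmt
  · refine antitoneOn_of_hasDerivWithinAt_nonpos (convex_Ioc 0 m) (hcont.mono Ioc_subset_Ioi_self)
      (fun x hx => (hf x (interior_subset hx).1).hasDerivWithinAt) (fun x hx => ?_)
      ⟨ht, htm⟩ ⟨hm, le_rfl⟩ htm
    rw [interior_Ioc] at hx
    exact nonpos_of_mul_nonneg_right (hf' x hx.1) (sub_neg.2 hx.2)
  · refine monotoneOn_of_hasDerivWithinAt_nonneg (convex_Ici m)
      (hcont.mono fun x hx => hm.trans_le hx)
      (fun x hx => (hf x (hm.trans_le (interior_subset hx))).hasDerivWithinAt) (fun x hx => ?_)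
      self_mem_Ici hmt hmt
    rw [interior_Ici] at hx
    exact nonneg_of_mul_nonneg_right (hf' x (hm.trans hx)) (sub_pos.2 hx)

lemma hasDerivAt_sub_one_mul_add_five_div_sub_log {x : ℝ} (hx : 0 < x) :
    HasDerivAt (fun t => (t - 1) * (t + 5) / (4 * t + 2) - log t)
      (4 * (x - 1) ^ 3 / (x * (4 * x + 2) ^ 2)) x := by
  have hden : 4 * x + 2 ≠ 0 := by positivity
  have hnum := ((hasDerivAt_id' x).sub_const 1).fun_mul ((hasDerivAt_id' x).add_const 5)
  have hden' := ((hasDerivAt_id' x).const_mul 4).add_const 2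
  refine ((hnum.fun_div hden' hden).fun_sub (hasDerivAt_log hx.ne')).congr_deriv ?_
  field_simp
  ring

theorem log_le_sub_one_mul_add_five_div {t : ℝ} (ht : 0 < t) :
    log t ≤ (t - 1) * (t + 5) / (4 * t + 2) := by
  have h := le_of_sub_mul_deriv_nonneg one_pos ht
    (fun x hx => hasDerivAt_sub_one_mul_add_five_div_sub_log hx) fun x hx => by
      rw [← mul_div_assoc, show (x - 1) * (4 * (x - 1) ^ 3) = 4 * (x - 1) ^ 4 by ring]
      positivity
  simpa using h

theorem sq_div_le_sub_one_sub_log {t : ℝ} (ht : 0 < t) :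
    3 * (t - 1) ^ 2 / (4 * t + 2) ≤ t - 1 - log t := by
  have hpade := log_le_sub_one_mul_add_five_div ht
  have hgap : t - 1 - (t - 1) * (t + 5) / (4 * t + 2) = 3 * (t - 1) ^ 2 / (4 * t + 2) := by
    field_simp
    ring
  linarith

theorem stmt_1_general (a c c' : ℝ) (ha : a ≤ 1 / 2)
    (hc : 0 < c) (hc' : 0 < c') (hca : a * c' ≤ c) :
    3 * a / 5 * (c' / c - 1) ^ 2 ≤ c' / c - 1 - Real.log (c' / c) := by
  set t := c' / c
  have ht : 0 < t := div_pos hc' hc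
  have hat : a * t ≤ 1 := by
    rw [← mul_div_assoc, div_le_one hc]
    exact hca
  have hcoef : 3 * a / 5 ≤ 3 / (4 * t + 2) := by
    rw [le_div_iff₀ (by positivity)]
    linarith
  calc 3 * a / 5 * (t - 1) ^ 2 ≤ 3 / (4 * t + 2) * (t - 1) ^ 2 := by gcongr
    _ = 3 * (t - 1) ^ 2 / (4 * t + 2) := by ring
    _ ≤ t - 1 - log t := sq_div_le_sub_one_sub_log ht

/-- For a ∈ (0,1/2] and c ≥ a·c', K(c,c') ≥ (3a/5)·Q(c,c'). -/
theorem stmt_1 (a c c' : ℝ) (ha0 : 0 < a) (ha : a ≤ 1 / 2)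
    (hc : 0 < c) (hc' : 0 < c') (hca : a * c' ≤ c) :
    3 * a / 5 * (c' / c - 1) ^ 2 ≤ c' / c - 1 - Real.log (c' / c) :=
  stmt_1_general a c c' ha hc hc' hca
end

section
/- Let Σ and Σ̃ be symmetric positive semi-definite bilinear forms on (p+1)×m matrices of the block form ⟨b, Σ b⟩ = Σ_{j₁,j₂} b_{j₁·}ᵀ Σ_{j₁j₂} b_{j₂·}, where each Σ_{j₁j₂} is an m×m matrix. Suppose (i) the compatibility condition ν²(Σ_{j∈S} ‖b_{j·}‖₂)² ≤ |S|·⟨b, Σ b⟩ holds for all b with Σ_{j∉S} ‖b_{j·}‖₂ ≤ ξ·Σ_{j∈S} ‖b_{j·}‖₂, (ii) sup_{j₁,j₂} ‖Σ̃_{j₁j₂} - Σ_{j₁j₂}‖_op ≤ λ, and (iii) (1+ξ)²ν^{-2}|S|λ ≤ η < 1. Then for all such b, (1-η)ν²(Σ_{j∈S} ‖b_{j·}‖₂)² ≤ |S|·⟨b, Σ̃ b⟩. -/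
/-!
Each block of `Σ̃ - Σ` has operator norm at most `λ`, so the two block forms differ by at most
`λ (∑ⱼ ‖b_j‖)²`; on the cone this is at most `λ (1 + ξ)² (∑_{j ∈ S} ‖b_j‖)²`, which by (iii) is an
`η`-fraction of the lower bound `ν² (∑_{j ∈ S} ‖b_j‖)² / |S|` supplied by the compatibility of `Σ`.
-/

open Finset

theorem abs_sum_mul_mul_le_opNorm_mul {n : Type*} [Fintype n] [DecidableEq n]
    (A : Matrix n n ℝ) (x y : n → ℝ) :
    |∑ k, ∑ l, x k * A k l * y l| ≤
      ‖Matrix.toEuclideanCLM (𝕜 := ℝ) A‖ * √(∑ k, x k ^ 2) * √(∑ k, y k ^ 2) := by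
  have hnorm (v : n → ℝ) : ‖WithLp.toLp 2 v‖ = √(∑ k, v k ^ 2) := by
    simp [EuclideanSpace.norm_eq, sq_abs]
  have hinner : ∑ k, ∑ l, x k * A k l * y l =
      inner ℝ (WithLp.toLp 2 x) (Matrix.toEuclideanCLM (𝕜 := ℝ) A (WithLp.toLp 2 y)) := by
    simp only [Matrix.toEuclideanCLM_toLp, PiLp.inner_apply, Matrix.mulVec, dotProduct, sum_mul,
      RCLike.inner_apply, conj_trivial]
    exact sum_congr rfl fun k _ => sum_congr rfl fun l _ => by ring
  rw [hinner, ← hnorm, ← hnorm, mul_right_comm]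
  calc _ ≤ ‖WithLp.toLp 2 x‖ * ‖Matrix.toEuclideanCLM (𝕜 := ℝ) A (WithLp.toLp 2 y)‖ :=
        abs_real_inner_le_norm _ _
    _ ≤ ‖WithLp.toLp 2 x‖ * (‖Matrix.toEuclideanCLM (𝕜 := ℝ) A‖ * ‖WithLp.toLp 2 y‖) := by
        gcongr; exact ContinuousLinearMap.le_opNorm _ _
    _ = _ := by ring

def blockQuadForm {ι κ : Type*} [Fintype ι] [Fintype κ] (A : ι → ι → Matrix κ κ ℝ)
    (b : ι → κ → ℝ) : ℝ :=
  ∑ j₁, ∑ j₂, ∑ k, ∑ l, b j₁ k * A j₁ j₂ k l * b j₂ l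

section BlockQuadForm

variable {ι κ : Type*} [Fintype ι] [Fintype κ]

theorem blockQuadForm_sub (A B : ι → ι → Matrix κ κ ℝ) (b : ι → κ → ℝ) :
    blockQuadForm (A - B) b = blockQuadForm A b - blockQuadForm B b := by
  simp only [blockQuadForm, Pi.sub_apply, Matrix.sub_apply, mul_sub, sub_mul, sum_sub_distrib]

theorem abs_blockQuadForm_le [DecidableEq κ] {A : ι → ι → Matrix κ κ ℝ} {lam : ℝ}
    (hA : ∀ j₁ j₂, ‖Matrix.toEuclideanCLM (𝕜 := ℝ) (A j₁ j₂)‖ ≤ lam) (b : ι → κ → ℝ) :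
    |blockQuadForm A b| ≤ lam * (∑ j, √(∑ k, b j k ^ 2)) ^ 2 := by
  rw [sq, sum_mul_sum, mul_sum]
  refine (abs_sum_le_sum_abs _ _).trans (sum_le_sum fun j₁ _ => ?_)
  rw [mul_sum]
  refine (abs_sum_le_sum_abs _ _).trans (sum_le_sum fun j₂ _ => ?_)
  calc _ ≤ ‖Matrix.toEuclideanCLM (𝕜 := ℝ) (A j₁ j₂)‖ * √(∑ k, b j₁ k ^ 2) * √(∑ k, b j₂ k ^ 2) :=
        abs_sum_mul_mul_le_opNorm_mul _ _ _
    _ ≤ _ := by rw [mul_assoc]; gcongr; exact hA j₁ j₂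

end BlockQuadForm

theorem sum_le_one_add_mul_sum_of_sum_sdiff_le {ι : Type*} [Fintype ι] [DecidableEq ι]
    (S : Finset ι) (f : ι → ℝ) {ξ : ℝ} (h : ∑ j ∈ univ \ S, f j ≤ ξ * ∑ j ∈ S, f j) :
    ∑ j, f j ≤ (1 + ξ) * ∑ j ∈ S, f j := by
  rw [← sum_sdiff (subset_univ S)]
  linarith

theorem stmt_14_general (p m : ℕ) (S : Finset (Fin (p + 1)))
    (Sig SigT : Fin (p + 1) → Fin (p + 1) → Matrix (Fin m) (Fin m) ℝ)
    (ν ξ lam η : ℝ) (hν : 0 < ν) (hlam : 0 ≤ lam)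
    (Q : (Fin (p + 1) → Fin (p + 1) → Matrix (Fin m) (Fin m) ℝ) →
      (Fin (p + 1) → Fin m → ℝ) → ℝ)
    (hQ : ∀ A b, Q A b = ∑ j₁, ∑ j₂, ∑ k, ∑ l, b j₁ k * A j₁ j₂ k l * b j₂ l)
    (hcompat : ∀ b : Fin (p + 1) → Fin m → ℝ,
      (∑ j ∈ Finset.univ \ S, Real.sqrt (∑ k, b j k ^ 2) ≤
        ξ * ∑ j ∈ S, Real.sqrt (∑ k, b j k ^ 2)) →
      ν ^ 2 * (∑ j ∈ S, Real.sqrt (∑ k, b j k ^ 2)) ^ 2 ≤ (S.card : ℝ) * Q Sig b)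
    (hop : ∀ j₁ j₂,
      ‖Matrix.toEuclideanCLM (𝕜 := ℝ) (SigT j₁ j₂ - Sig j₁ j₂)‖ ≤ lam)
    (hcond : (1 + ξ) ^ 2 * ν⁻¹ ^ 2 * (S.card : ℝ) * lam ≤ η) :
    ∀ b : Fin (p + 1) → Fin m → ℝ,
      (∑ j ∈ Finset.univ \ S, Real.sqrt (∑ k, b j k ^ 2) ≤
        ξ * ∑ j ∈ S, Real.sqrt (∑ k, b j k ^ 2)) →
      (1 - η) * ν ^ 2 * (∑ j ∈ S, Real.sqrt (∑ k, b j k ^ 2)) ^ 2 ≤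
        (S.card : ℝ) * Q SigT b := by
  obtain rfl : Q = blockQuadForm := funext₂ hQ
  intro b hb
  set s := ∑ j ∈ S, √(∑ k, b j k ^ 2)
  have hdiff : blockQuadForm Sig b - blockQuadForm SigT b ≤ lam * ((1 + ξ) * s) ^ 2 :=
    calc _ ≤ |blockQuadForm (SigT - Sig) b| := by
          rw [blockQuadForm_sub, ← neg_sub]; exact neg_le_abs _
      _ ≤ lam * (∑ j, √(∑ k, b j k ^ 2)) ^ 2 := abs_blockQuadForm_le hop b
      _ ≤ _ := by gcongr; exact sum_le_one_add_mul_sum_of_sum_sdiff_le S _ hb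
  have hην : (1 + ξ) ^ 2 * S.card * lam ≤ η * ν ^ 2 :=
    calc _ = (1 + ξ) ^ 2 * ν⁻¹ ^ 2 * S.card * lam * ν ^ 2 := by field_simp
      _ ≤ η * ν ^ 2 := by gcongr
  linear_combination hcompat b hb + mul_le_mul_of_nonneg_left hdiff S.card.cast_nonneg +
    mul_le_mul_of_nonneg_right hην (sq_nonneg s)

/-- Transfer of the compatibility condition from a bilinear form Sig to a
perturbed bilinear form SigT whose blocks are close in operator norm. -/
theorem stmt_14 (p m : ℕ) (S : Finset (Fin (p + 1)))
    (Sig SigT : Fin (p + 1) → Fin (p + 1) → Matrix (Fin m) (Fin m) ℝ)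
    (ν ξ lam η : ℝ) (hν : 0 < ν) (hξ : 1 < ξ) (hlam : 0 ≤ lam)
    (hη0 : 0 < η) (hη1 : η < 1)
    (Q : (Fin (p + 1) → Fin (p + 1) → Matrix (Fin m) (Fin m) ℝ) →
      (Fin (p + 1) → Fin m → ℝ) → ℝ)
    (hQ : ∀ A b, Q A b = ∑ j₁, ∑ j₂, ∑ k, ∑ l, b j₁ k * A j₁ j₂ k l * b j₂ l)
    (hsymm : ∀ j₁ j₂, (Sig j₁ j₂).transpose = Sig j₂ j₁)
    (hsymm' : ∀ j₁ j₂, (SigT j₁ j₂).transpose = SigT j₂ j₁)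
    (hpsd : ∀ b, 0 ≤ Q Sig b) (hpsd' : ∀ b, 0 ≤ Q SigT b)
    (hcompat : ∀ b : Fin (p + 1) → Fin m → ℝ,
      (∑ j ∈ Finset.univ \ S, Real.sqrt (∑ k, b j k ^ 2) ≤
        ξ * ∑ j ∈ S, Real.sqrt (∑ k, b j k ^ 2)) →
      ν ^ 2 * (∑ j ∈ S, Real.sqrt (∑ k, b j k ^ 2)) ^ 2 ≤ (S.card : ℝ) * Q Sig b)
    (hop : ∀ j₁ j₂,
      ‖Matrix.toEuclideanCLM (𝕜 := ℝ) (SigT j₁ j₂ - Sig j₁ j₂)‖ ≤ lam)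
    (hcond : (1 + ξ) ^ 2 * ν⁻¹ ^ 2 * (S.card : ℝ) * lam ≤ η) :
    ∀ b : Fin (p + 1) → Fin m → ℝ,
      (∑ j ∈ Finset.univ \ S, Real.sqrt (∑ k, b j k ^ 2) ≤
        ξ * ∑ j ∈ S, Real.sqrt (∑ k, b j k ^ 2)) →
      (1 - η) * ν ^ 2 * (∑ j ∈ S, Real.sqrt (∑ k, b j k ^ 2)) ^ 2 ≤
        (S.card : ℝ) * Q SigT b :=
  stmt_14_general p m S Sig SigT ν ξ lam η hν hlam Q hQ hcompat hop hcond
end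

section
/- Let ℓ(γ) be a differentiable function of (p+1)×K matrices γ with columns γ_k such that Σ_{k=0}^{K-1} ∂ℓ(γ)/∂γ_k = 0 for every γ. Let γ̂ be a minimizer of ℓ(γ) + λ Σ_{j=1}^p ‖γ_{j·}‖₂ with λ > 0, where γ_{j·} = (γ_{j0}, …, γ_{j,K-1})ᵀ. Then Σ_{k=0}^{K-1} γ̂_{jk} = 0 for every j = 1, …, p. -/
/-!
Moving row `j` of `γhat` in the direction `w` changes the loss at first order by
`fderiv ℓ γhat (Pi.single j w)`, which for `w = 1` is `∑ k, ∂ℓ/∂γ_{jk} = 0`. If the row is nonzero,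
the penalty `λ ‖γ_{j·}‖₂` is differentiable along this line with derivative
`λ ⟪γhat_{j·}, w⟫ / ‖γhat_{j·}‖₂`, so stationarity of the minimizer forces `∑ k, γhat j k = 0`;
a zero row sums to zero trivially.
-/

open Finset

section

variable {ι κ : Type*} [Fintype κ]

noncomputable def groupLassoPenalty (s : Finset ι) (γ : ι → κ → ℝ) : ℝ :=
  ∑ i ∈ s, √(∑ k, γ i k ^ 2)

theorem hasDerivAt_sqrt_sum_sq_add_mul (v w : κ → ℝ) (hv : ∑ k, v k ^ 2 ≠ 0) :
    HasDerivAt (fun t : ℝ => √(∑ k, (v k + t * w k) ^ 2))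
      ((∑ k, v k * w k) / √(∑ k, v k ^ 2)) 0 := by
  have hsq : HasDerivAt (fun t : ℝ => ∑ k, (v k + t * w k) ^ 2) (2 * ∑ k, v k * w k) 0 := by
    rw [mul_sum]
    refine HasDerivAt.fun_sum fun k _ => ?_
    refine (((hasDerivAt_mul_const (w k)).const_add (v k)).fun_pow 2).congr_deriv ?_
    simp only [zero_mul, add_zero]
    ring
  convert hsq.sqrt (by simpa using hv) using 1
  simp only [zero_mul, add_zero]
  field_simp

variable [DecidableEq ι]

theorem hasLineDerivAt_groupLassoPenalty_single {s : Finset ι} {j : ι} (hj : j ∈ s)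
    (γ : ι → κ → ℝ) (hγ : ∑ k, γ j k ^ 2 ≠ 0) (w : κ → ℝ) :
    HasLineDerivAt ℝ (groupLassoPenalty s) ((∑ k, γ j k * w k) / √(∑ k, γ j k ^ 2))
      γ (Pi.single j w) := by
  have hterm (i : ι) :
      HasDerivAt (fun t : ℝ => √(∑ k, (γ + t • Pi.single (M := fun _ => κ → ℝ) j w) i k ^ 2))
      (if i = j then (∑ k, γ j k * w k) / √(∑ k, γ j k ^ 2) else 0) 0 := by
    by_cases h : i = j
    · subst h
      simpa using hasDerivAt_sqrt_sum_sq_add_mul (γ i) w hγ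
    · simpa [h] using hasDerivAt_const (0 : ℝ) (√(∑ k, γ i k ^ 2))
  have := HasDerivAt.fun_sum (u := s) fun i _ => hterm i
  rwa [sum_ite_eq' s j, if_pos hj] at this

theorem sum_mul_eq_zero_of_isMinOn_add_groupLassoPenalty [Fintype ι]
    {ℓ : (ι → κ → ℝ) → ℝ} {lam : ℝ} {s : Finset ι} {γ : ι → κ → ℝ} {j : ι} {w : κ → ℝ}
    (hmin : IsMinOn (fun γ => ℓ γ + lam * groupLassoPenalty s γ) Set.univ γ)
    (hℓ : DifferentiableAt ℝ ℓ γ) (hdir : fderiv ℝ ℓ γ (Pi.single j w) = 0)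
    (hlam : lam ≠ 0) (hj : j ∈ s) :
    ∑ k, γ j k * w k = 0 := by
  by_cases hrow : ∑ k, γ j k ^ 2 = 0
  · have hzero : γ j = 0 := funext fun k =>
      pow_eq_zero_iff two_ne_zero |>.mp <|
        (sum_eq_zero_iff_of_nonneg fun k _ => sq_nonneg (γ j k)).mp hrow k (mem_univ k)
    simp [hzero]
  have hloss : HasLineDerivAt ℝ ℓ 0 γ (Pi.single j w) :=
    hdir ▸ hℓ.hasFDerivAt.hasLineDerivAt _
  have hderiv : HasLineDerivAt ℝ (fun γ => ℓ γ + lam * groupLassoPenalty s γ)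
      (0 + lam * ((∑ k, γ j k * w k) / √(∑ k, γ j k ^ 2))) γ (Pi.single j w) :=
    HasDerivAt.add hloss
      ((hasLineDerivAt_groupLassoPenalty_single hj γ hrow w).const_mul lam)
  have hstat := hmin.hasLineDerivAt_eq_zero hderiv (by simp)
  have hnorm : √(∑ k, γ j k ^ 2) ≠ 0 := by positivity
  simpa [hlam, hnorm] using hstat

end

/-- Sum-to-zero relationship for group-Lasso penalized estimates: if the
columnwise partial derivatives of the loss always sum to zero, then each
penalized row of a minimizer sums to zero. -/
theorem stmt_18 (p K : ℕ)
    (ℓ : (Fin (p + 1) → Fin K → ℝ) → ℝ)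
    (hdiff : Differentiable ℝ ℓ)
    (hsum : ∀ (γ : (Fin (p + 1) → Fin K → ℝ)) (j : Fin (p + 1)),
      ∑ k, fderiv ℝ ℓ γ (Pi.single j (Pi.single k 1)) = 0)
    (lam : ℝ) (hlam : 0 < lam)
    (γhat : (Fin (p + 1) → Fin K → ℝ))
    (hmin : ∀ γ : (Fin (p + 1) → Fin K → ℝ),
      ℓ γhat + lam * ∑ j ∈ Finset.univ.erase 0, Real.sqrt (∑ k, γhat j k ^ 2) ≤
        ℓ γ + lam * ∑ j ∈ Finset.univ.erase 0, Real.sqrt (∑ k, γ j k ^ 2)) :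
    ∀ j : Fin (p + 1), j ≠ 0 → ∑ k, γhat j k = 0 := by
  intro j hj
  have hsingle :
      (Pi.single j 1 : Fin (p + 1) → Fin K → ℝ) = ∑ k, Pi.single j (Pi.single k 1) := by
    ext i k
    by_cases h : i = j <;> simp [h, Pi.single_apply, Finset.sum_apply]
  have hdir : fderiv ℝ ℓ γhat (Pi.single j 1) = 0 := by
    rw [hsingle, map_sum, hsum]
  simpa using sum_mul_eq_zero_of_isMinOn_add_groupLassoPenalty (s := univ.erase 0) (w := 1)
    (fun γ _ => hmin γ) (hdiff γhat) hdir hlam.ne' (mem_erase.mpr ⟨hj, mem_univ j⟩)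
end

section
/- Let π, π' ∈ (0,1) and define K(π, π') = π'/π - 1 - log(π'/π) and the KL divergence L over a K-category distribution. For a single observation with indicator R^{(t)} and probabilities π(t), π'(t) for category t, the pointwise Bregman divergence of the calibration loss between linear predictors h and h' satisfies: if π(k,x) = e^{h_k(x)}/Σ_s e^{h_s(x)} and π'(k,x) = e^{h'_k(x)}/Σ_s e^{h'_s(x)}, then Σ_{k≠t}[e^{h_k - h_t} - e^{h'_k - h'_t} - e^{h'_k - h'_t}((h_k - h_t) - (h'_k - h'_t))] = (1/π'(t,x))·[K(π(t,x), π'(t,x)) + L(π(x), π'(x))], where L(π, π') = Σ_k π'(k) log(π'(k)/π(k)). -/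
/-!
Relative to category `t`, the odds are `π k / π t = exp (h k - h t)`, so the left-hand sum
is `1 / π t - 1 / π' t - ∑ k, (π' k / π' t) * ((h k - h t) - (h' k - h' t))`, the term
`k = t` being zero. On the other side, `log (π' k / π k)` differs from `log (π' t / π t)`
exactly by the difference of relative logits, so the Kullback–Leibler divergence is
`log (π' t / π t)` plus `π' t` times that same weighted sum; the logarithms cancel against
those in `K`.
-/

namespace Softmax

open Finset Real

variable {ι : Type*} [Fintype ι]

noncomputable def softmax (h : ι → ℝ) (k : ι) : ℝ := exp (h k) / ∑ s, exp (h s)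

lemma sum_exp_pos (h : ι → ℝ) (t : ι) : 0 < ∑ s, exp (h s) :=
  sum_pos (fun s _ => exp_pos (h s)) ⟨t, mem_univ t⟩

lemma softmax_pos (h : ι → ℝ) (k : ι) : 0 < softmax h k :=
  div_pos (exp_pos _) (sum_exp_pos h k)

lemma sum_softmax (h : ι → ℝ) (t : ι) : ∑ k, softmax h k = 1 := by
  simp only [softmax, ← sum_div]
  exact div_self (sum_exp_pos h t).ne'

lemma softmax_div_softmax (h : ι → ℝ) (k t : ι) :
    softmax h k / softmax h t = exp (h k - h t) := by
  rw [softmax, softmax, div_div_div_cancel_right₀ (sum_exp_pos h t).ne', exp_sub]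

lemma sum_exp_sub_eq_inv_softmax (h : ι → ℝ) (t : ι) :
    ∑ k, exp (h k - h t) = (softmax h t)⁻¹ := by
  simp only [← softmax_div_softmax h _ t, ← sum_div, sum_softmax h t, one_div]

lemma log_softmax_div_softmax (h h' : ι → ℝ) (k t : ι) :
    log (softmax h' k / softmax h k) =
      log (softmax h' t / softmax h t) + ((h' k - h' t) - (h k - h t)) := by
  have hk : softmax h' k / softmax h k =
      softmax h' t / softmax h t * (exp (h' k - h' t) / exp (h k - h t)) := by
    rw [← softmax_div_softmax h' k t, ← softmax_div_softmax h k t]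
    have := (softmax_pos h t).ne'
    have := (softmax_pos h' t).ne'
    field_simp
  have hpos := div_pos (softmax_pos h' t) (softmax_pos h t)
  rw [hk, log_mul hpos.ne' (by positivity), log_div (exp_pos _).ne' (exp_pos _).ne',
    log_exp, log_exp]

lemma sum_softmax_mul_log_div (h h' : ι → ℝ) (t : ι) :
    ∑ k, softmax h' k * log (softmax h' k / softmax h k) =
      log (softmax h' t / softmax h t) -
        softmax h' t * ∑ k, exp (h' k - h' t) * ((h k - h t) - (h' k - h' t)) := by
  have hweight : ∀ k, softmax h' k = softmax h' t * exp (h' k - h' t) := fun k => by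
    rw [← softmax_div_softmax h' k t, mul_div_cancel₀ _ (softmax_pos h' t).ne']
  calc ∑ k, softmax h' k * log (softmax h' k / softmax h k)
      = ∑ k, (softmax h' k * log (softmax h' t / softmax h t) -
          softmax h' t * (exp (h' k - h' t) * ((h k - h t) - (h' k - h' t)))) := by
        refine sum_congr rfl fun k _ => ?_
        rw [log_softmax_div_softmax h h' k t, hweight k]
        ring
    _ = _ := by rw [sum_sub_distrib, ← sum_mul, sum_softmax h' t, one_mul, mul_sum]

end Softmax

open Softmax Finset in
/-- Pointwise identity relating the calibration-loss Bregman divergence to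
K(π t, π' t) plus the Kullback–Leibler divergence, scaled by 1/π'(t). -/
theorem stmt_19 (K : ℕ) (h h' : Fin K → ℝ) (t : Fin K) :
    letI π : Fin K → ℝ := fun k => Real.exp (h k) / ∑ s, Real.exp (h s)
    letI π' : Fin K → ℝ := fun k => Real.exp (h' k) / ∑ s, Real.exp (h' s)
    ∑ k ∈ Finset.univ.erase t,
        (Real.exp (h k - h t) - Real.exp (h' k - h' t) -
          Real.exp (h' k - h' t) * ((h k - h t) - (h' k - h' t))) =
      (1 / π' t) *
        ((π' t / π t - 1 - Real.log (π' t / π t)) +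
          ∑ k, π' k * Real.log (π' k / π k)) := by
  dsimp only
  change _ = 1 / softmax h' t * ((softmax h' t / softmax h t - 1 -
    Real.log (softmax h' t / softmax h t)) +
      ∑ k, softmax h' k * Real.log (softmax h' k / softmax h k))
  rw [sum_erase _ (by simp), sum_sub_distrib, sum_sub_distrib, sum_exp_sub_eq_inv_softmax,
    sum_exp_sub_eq_inv_softmax, sum_softmax_mul_log_div]
  have := (softmax_pos h t).ne'
  have := (softmax_pos h' t).ne'
  field_simp
  ring
end
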